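/- For every λ > 0 and every t ≥ 0, the family l ↦ (e^{λ·2^l} + e^{-t·2^l})/(1 + e^{λ·2^l}) indexed by l ∈ ℤ is multipliable, and its infinite product equals λ/(λ + t). (Equivalently, the Laplace transform of the binary expansion Σ 2^l A_l with independent Bernoulli digits A_l of parameters a_l = 1/(1+e^{λ·2^l}) equals the Laplace transform λ/(λ+t) of the exponential distribution with rate λ; note that 1 - a_l + a_l·e^{-t·2^l} = (e^{λ·2^l} + e^{-t·2^l})/(1 + e^{λ·2^l}).) -/

import Mathlib

/-!
Put `x = 2 ^ l` and `G x = (1 - e^{-(λ+t)x}) / (1 - e^{-λx})`. Since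
`1 - e^{-2y} = (1 - e^{-y})(1 + e^{-y})`, the `l`-th factor is `G (2x) / G x`, so the product over
`ℤ` telescopes to `lim_{x→∞} G / lim_{x→0⁺} G = 1 / ((λ + t) / λ)`. Every factor is at most `1`,
so `l ↦ G (2 ^ l)` is antitone; the logarithms of the factors then have constant sign, which makes
the telescoping series converge unconditionally, as a sum over `ℤ` requires.
-/
open Real Filter Topology

theorem hasSum_int_sub_of_monotone {F : ℤ → ℝ} {a b : ℝ} (hF : Monotone F)
    (hTop : Tendsto F atTop (𝓝 a)) (hBot : Tendsto F atBot (𝓝 b)) :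
    HasSum (fun l => F (l + 1) - F l) (a - b) := by
  have hnonneg : ∀ l, 0 ≤ F (l + 1) - F l := fun l => sub_nonneg.2 (hF (by omega))
  have hnat : HasSum (fun n : ℕ => F ((n : ℤ) + 1) - F n) (a - F 0) := by
    rw [hasSum_iff_tendsto_nat_of_nonneg (fun n => hnonneg n)]
    refine ((hTop.comp tendsto_natCast_atTop_atTop).sub_const (F 0)).congr fun n => ?_
    exact_mod_cast (Finset.sum_range_sub (fun n : ℕ => F n) n).symm
  have hneg : HasSum (fun n : ℕ => F (-((n : ℤ) + 1) + 1) - F (-((n : ℤ) + 1))) (F 0 - b) := by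
    rw [hasSum_iff_tendsto_nat_of_nonneg (fun n => hnonneg _)]
    refine ((hBot.comp (tendsto_neg_atTop_atBot.comp tendsto_natCast_atTop_atTop)).const_sub
      (F 0)).congr fun n => ?_
    have h := Finset.sum_range_sub' (fun i : ℕ => F (-(i : ℤ))) n
    simp only [Nat.cast_add, Nat.cast_one, Nat.cast_zero, neg_zero] at h
    simp only [Function.comp_apply, ← h]
    exact Finset.sum_congr rfl fun i _ => by congr 2; ring
  simpa only [sub_add_sub_cancel] using
    HasSum.of_nat_of_neg_add_one (f := fun l => F (l + 1) - F l) hnat hneg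

theorem hasProd_int_div_of_antitone {G : ℤ → ℝ} {a b : ℝ} (hG₀ : ∀ l, 0 < G l) (hG : Antitone G)
    (ha : 0 < a) (hb : 0 < b) (hTop : Tendsto G atTop (𝓝 a)) (hBot : Tendsto G atBot (𝓝 b)) :
    HasProd (fun l => G (l + 1) / G l) (a / b) := by
  have hlog : HasSum (fun l => log (G (l + 1)) - log (G l)) (log a - log b) := by
    have := hasSum_int_sub_of_monotone (F := fun l => -log (G l))
      (fun l m h => neg_le_neg (log_le_log (hG₀ m) (hG h)))
      ((continuousAt_log ha.ne').tendsto.comp hTop).neg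
      ((continuousAt_log hb.ne').tendsto.comp hBot).neg
    simpa only [neg_sub_neg, neg_sub] using this.neg
  convert hlog.rexp using 1
  · ext l
    rw [Function.comp_apply, exp_sub, exp_log (hG₀ _), exp_log (hG₀ _)]
  · rw [exp_sub, exp_log ha, exp_log hb]

lemma tendsto_zpow_atTop_atTop_of_one_lt {b : ℝ} (hb : 1 < b) :
    Tendsto (fun l : ℤ => b ^ l) atTop atTop := by
  refine ((tendsto_rpow_atTop_of_base_gt_one b hb).comp tendsto_intCast_atTop_atTop).congr
    fun l => ?_
  exact rpow_intCast b l

lemma tendsto_zpow_atBot_nhdsGT_zero_of_one_lt {b : ℝ} (hb : 1 < b) :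
    Tendsto (fun l : ℤ => b ^ l) atBot (𝓝[>] 0) := by
  refine tendsto_nhdsWithin_iff.2 ⟨?_, .of_forall fun l => zpow_pos (zero_lt_one.trans hb) l⟩
  refine ((tendsto_rpow_atBot_of_base_gt_one b hb).comp
    (tendsto_intCast_atBot_iff.2 tendsto_id)).congr fun l => ?_
  exact rpow_intCast b l

lemma tendsto_one_sub_exp_neg_mul_div_nhdsGT_zero (c : ℝ) :
    Tendsto (fun x => (1 - exp (-c * x)) / x) (𝓝[>] 0) (𝓝 c) := by
  have hderiv : HasDerivAt (fun x => 1 - exp (-c * x)) c 0 := by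
    simpa using (((hasDerivAt_id (0 : ℝ)).const_mul (-c)).exp).const_sub 1
  refine hderiv.tendsto_slope_zero_right.congr fun x => ?_
  simp [div_eq_inv_mul]

noncomputable def expRatio (c d x : ℝ) : ℝ := (1 - exp (-c * x)) / (1 - exp (-d * x))

lemma expRatio_pos {c d x : ℝ} (hc : 0 < c) (hd : 0 < d) (hx : 0 < x) : 0 < expRatio c d x := by
  unfold expRatio
  have hc' : exp (-c * x) < 1 := exp_lt_one_iff.2 (by nlinarith)
  have hd' : exp (-d * x) < 1 := exp_lt_one_iff.2 (by nlinarith)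
  exact div_pos (by linarith) (by linarith)

lemma expRatio_two_mul_div {c d x : ℝ} (hc : c ≠ 0) (hd : d ≠ 0) (hx : x ≠ 0) :
    expRatio c d (2 * x) / expRatio c d x = (1 + exp (-c * x)) / (1 + exp (-d * x)) := by
  have hsq (a : ℝ) : exp (-a * (2 * x)) = exp (-a * x) ^ 2 := by
    rw [← exp_nat_mul]; ring_nf
  have hne {a : ℝ} (ha : a ≠ 0) : 1 - exp (-a * x) ≠ 0 := by
    rw [sub_ne_zero, ne_comm, Ne, exp_eq_one_iff]; simp [ha, hx]
  have hfactor (y : ℝ) : 1 - y ^ 2 = (1 - y) * (1 + y) := by ring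
  unfold expRatio
  rw [hsq, hsq, hfactor, hfactor, mul_div_mul_comm]
  exact mul_div_cancel_left₀ _ (div_ne_zero (hne hc) (hne hd))

lemma tendsto_expRatio_atTop {c d : ℝ} (hc : 0 < c) (hd : 0 < d) :
    Tendsto (expRatio c d) atTop (𝓝 1) := by
  have hexp {a : ℝ} (ha : 0 < a) : Tendsto (fun x => exp (-a * x)) atTop (𝓝 0) :=
    tendsto_exp_atBot.comp (tendsto_id.const_mul_atTop_of_neg (neg_neg_of_pos ha))
  have := ((hexp hc).const_sub 1).div ((hexp hd).const_sub 1) (by norm_num)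
  rwa [sub_zero, div_one] at this

lemma tendsto_expRatio_nhdsGT_zero (c : ℝ) {d : ℝ} (hd : d ≠ 0) :
    Tendsto (expRatio c d) (𝓝[>] 0) (𝓝 (c / d)) := by
  refine ((tendsto_one_sub_exp_neg_mul_div_nhdsGT_zero c).div
    (tendsto_one_sub_exp_neg_mul_div_nhdsGT_zero d) hd).congr' ?_
  filter_upwards [self_mem_nhdsWithin] with x hx
  exact div_div_div_cancel_right₀ (ne_of_gt hx) _ _

lemma exp_add_exp_neg_div_one_add_exp (d t x : ℝ) :
    (exp (d * x) + exp (-t * x)) / (1 + exp (d * x)) =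
      (1 + exp (-(d + t) * x)) / (1 + exp (-d * x)) := by
  have hd : exp (-d * x) = (exp (d * x))⁻¹ := by rw [← exp_neg, neg_mul]
  have hdt : exp (-(d + t) * x) = exp (-t * x) * (exp (d * x))⁻¹ := by
    rw [← exp_neg, ← exp_add]; ring_nf
  rw [hd, hdt]
  field_simp
  ring

theorem laplace_transform_binary_expansion (lam t : ℝ) (hlam : 0 < lam) (ht : 0 ≤ t) :
    Multipliable (fun l : ℤ =>
        (Real.exp (lam * 2 ^ l) + Real.exp (-t * 2 ^ l)) / (1 + Real.exp (lam * 2 ^ l))) ∧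
      ∏' l : ℤ,
          (Real.exp (lam * 2 ^ l) + Real.exp (-t * 2 ^ l)) / (1 + Real.exp (lam * 2 ^ l)) =
        lam / (lam + t) := by
  have hs : 0 < lam + t := by positivity
  have htwo (l : ℤ) : (0 : ℝ) < 2 ^ l := zpow_pos two_pos l
  set G : ℤ → ℝ := fun l => expRatio (lam + t) lam (2 ^ l)
  have hfactor (l : ℤ) : G (l + 1) / G l =
      (exp (lam * 2 ^ l) + exp (-t * 2 ^ l)) / (1 + exp (lam * 2 ^ l)) := by
    rw [exp_add_exp_neg_div_one_add_exp, ← expRatio_two_mul_div hs.ne' hlam.ne' (htwo l).ne',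
      mul_comm (2 : ℝ), ← zpow_add_one₀ two_ne_zero]
  have hG₀ (l : ℤ) : 0 < G l := expRatio_pos hs hlam (htwo l)
  have hG : Antitone G := antitone_int_of_succ_le fun l => by
    rw [← div_le_one (hG₀ l), hfactor, div_le_one (by positivity), add_comm 1, add_le_add_iff_left,
      exp_le_one_iff]
    exact mul_nonpos_of_nonpos_of_nonneg (neg_nonpos.2 ht) (htwo l).le
  have hprod := hasProd_int_div_of_antitone hG₀ hG one_pos (div_pos hs hlam)
    ((tendsto_expRatio_atTop hs hlam).comp (tendsto_zpow_atTop_atTop_of_one_lt one_lt_two))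
    ((tendsto_expRatio_nhdsGT_zero _ hlam.ne').comp
      (tendsto_zpow_atBot_nhdsGT_zero_of_one_lt one_lt_two))
  rw [funext hfactor, one_div_div] at hprod
  exact ⟨hprod.multipliable, hprod.tprod_eq⟩
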